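/- Let A, A+E ∈ ℝ^{m×n} both have rank n, ε_A := ‖E‖/‖A‖, x* := A⁺b, and x̂ := (A+E)⁺b with x̂ ≠ 0. Then ‖x̂ − x*‖/‖x̂‖ ≤ κ(A)·ε_A·(1 + κ(A)·‖b − (A+E)x̂‖/(‖A‖‖x̂‖)). -/

import Mathlib

open Matrix
open scoped Matrix.Norms.L2Operator

/-- The `j`-th largest singular value of a real matrix. -/
noncomputable def sval {m n : ℕ} (M : Matrix (Fin m) (Fin n) ℝ) (j : Fin n) : ℝ :=
  Real.sqrt ((((Finset.univ.val.map
    (show (Mᵀ * M).IsHermitian from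
      Matrix.isHermitian_iff_isSymm.mpr (by simp [Matrix.IsSymm, Matrix.transpose_mul])).eigenvalues).sort (· ≥ ·)).getD j 0))

/-- Two-norm condition number `σ₁ / σₙ`. -/
noncomputable def condNum {m n : ℕ} (M : Matrix (Fin m) (Fin (n+1)) ℝ) : ℝ :=
  sval M 0 / sval M (Fin.last n)

/-- Euclidean norm of a vector. -/
noncomputable def e2norm {k : ℕ} (x : Fin k → ℝ) : ℝ := Real.sqrt (∑ i, (x i)^2)

lemma e2norm_eq_norm {k : ℕ} (x : Fin k → ℝ) :
    e2norm x = ‖(WithLp.equiv 2 (Fin k → ℝ)).symm x‖ := by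
  rw [EuclideanSpace.norm_eq]
  simp [e2norm, Real.norm_eq_abs, sq_abs]

lemma e2norm_nonneg {k : ℕ} (x : Fin k → ℝ) : 0 ≤ e2norm x := Real.sqrt_nonneg _

lemma e2norm_pos {k : ℕ} {x : Fin k → ℝ} (h : x ≠ 0) : 0 < e2norm x := by
  rw [e2norm_eq_norm, norm_pos_iff]
  intro h0
  apply h
  funext i
  simpa using congrArg (fun v => v i) h0

lemma e2norm_neg {k : ℕ} (x : Fin k → ℝ) : e2norm (-x) = e2norm x := by
  simp [e2norm]

lemma e2norm_add_le {k : ℕ} (x y : Fin k → ℝ) :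
    e2norm (x + y) ≤ e2norm x + e2norm y := by
  rw [e2norm_eq_norm, e2norm_eq_norm, e2norm_eq_norm]
  exact norm_add_le _ _

lemma e2norm_mulVec_le {a b : ℕ} (M : Matrix (Fin a) (Fin b) ℝ) (v : Fin b → ℝ) :
    e2norm (M *ᵥ v) ≤ ‖M‖ * e2norm v := by
  rw [e2norm_eq_norm, e2norm_eq_norm]
  exact M.l2_opNorm_mulVec _

lemma isUnit_of_rank_eq_card {k : ℕ} (M : Matrix (Fin k) (Fin k) ℝ) (h : M.rank = k) :
    IsUnit M := by
  rw [← Matrix.mulVec_surjective_iff_isUnit]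
  have htop : LinearMap.range M.mulVecLin = ⊤ := by
    apply Submodule.eq_top_of_finrank_eq
    rw [← Matrix.rank, h, Module.finrank_fin_fun]
  intro y
  exact LinearMap.range_eq_top.mp htop y

theorem stmt18 {m n : ℕ} (A E : Matrix (Fin m) (Fin n) ℝ) (b : Fin m → ℝ)
    (hrA : A.rank = n) (hrAE : (A + E).rank = n)
    (εA κ : ℝ) (hεA : εA = ‖E‖ / ‖A‖) (hκ : κ = ‖A‖ * ‖(Aᵀ * A)⁻¹ * Aᵀ‖)
    (xs xh : Fin n → ℝ) (hxs : xs = ((Aᵀ * A)⁻¹ * Aᵀ) *ᵥ b)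
    (hxh : xh = (((A + E)ᵀ * (A + E))⁻¹ * (A + E)ᵀ) *ᵥ b) (hne : xh ≠ 0) :
    e2norm (xh - xs) / e2norm xh ≤
      κ * εA * (1 + κ * (e2norm (b - (A + E) *ᵥ xh) / (‖A‖ * e2norm xh))) := by
  have hn0 : 0 < n := by
    rcases Nat.eq_zero_or_pos n with h | h
    · exact absurd (funext fun i => absurd i.isLt (by omega) : xh = 0) hne
    · exact h
  have hA0 : A ≠ 0 := by
    rintro rfl
    rw [Matrix.rank_zero] at hrA
    omega
  have hAn : (0:ℝ) < ‖A‖ := norm_pos_iff.mpr hA0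
  set P : Matrix (Fin n) (Fin m) ℝ := (Aᵀ * A)⁻¹ * Aᵀ with hP
  set N : Matrix (Fin n) (Fin n) ℝ := (Aᵀ * A)⁻¹ with hNdef
  set rh : Fin m → ℝ := b - (A + E) *ᵥ xh with hrh
  have hUA : IsUnit (Aᵀ * A) :=
    isUnit_of_rank_eq_card _ (by rw [Matrix.rank_transpose_mul_self, hrA])
  have hUB : IsUnit ((A + E)ᵀ * (A + E)) :=
    isUnit_of_rank_eq_card _ (by rw [Matrix.rank_transpose_mul_self, hrAE])
  have hdetA : IsUnit (Aᵀ * A).det := (Matrix.isUnit_iff_isUnit_det _).mp hUA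
  have hdetB : IsUnit ((A + E)ᵀ * (A + E)).det := (Matrix.isUnit_iff_isUnit_det _).mp hUB
  have hPA : P * A = 1 := by
    rw [hP, hNdef, Matrix.mul_assoc, Matrix.nonsing_inv_mul _ hdetA]
  -- orthogonality of the perturbed residual
  have hmat : ((A + E)ᵀ * (A + E)) * (((A + E)ᵀ * (A + E))⁻¹ * (A + E)ᵀ) = (A + E)ᵀ := by
    rw [← Matrix.mul_assoc, Matrix.mul_nonsing_inv _ hdetB, Matrix.one_mul]
  have h_orth : (A + E)ᵀ *ᵥ rh = 0 := by
    rw [hrh, Matrix.mulVec_sub, hxh, Matrix.mulVec_mulVec, Matrix.mulVec_mulVec, hmat, sub_self]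
  -- key decomposition
  have hxh' : P *ᵥ (A *ᵥ xh) = xh := by
    rw [Matrix.mulVec_mulVec, hPA, Matrix.one_mulVec]
  have h3 : Eᵀ *ᵥ rh = -(Aᵀ *ᵥ rh) := by
    have h4 : Aᵀ *ᵥ rh + Eᵀ *ᵥ rh = 0 := by
      rw [← Matrix.add_mulVec, ← Matrix.transpose_add]
      exact h_orth
    rw [eq_neg_iff_add_eq_zero, add_comm]
    exact h4
  have h2 : N *ᵥ (Eᵀ *ᵥ rh) = -(P *ᵥ rh) := by
    rw [h3, Matrix.mulVec_neg, Matrix.mulVec_mulVec, ← hP]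
  have hdec : xh - xs = -(P *ᵥ (E *ᵥ xh)) + N *ᵥ (Eᵀ *ᵥ rh) := by
    calc xh - xs = P *ᵥ (A *ᵥ xh) - P *ᵥ b := by rw [hxh', hxs]
      _ = P *ᵥ (A *ᵥ xh - b) := (Matrix.mulVec_sub P _ _).symm
      _ = P *ᵥ (-(E *ᵥ xh) - rh) := by
          rw [hrh, Matrix.add_mulVec]
          abel_nf
      _ = P *ᵥ (-(E *ᵥ xh)) - P *ᵥ rh := Matrix.mulVec_sub P _ _
      _ = -(P *ᵥ (E *ᵥ xh)) + N *ᵥ (Eᵀ *ᵥ rh) := by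
          rw [h2, Matrix.mulVec_neg]
          abel_nf
  -- norm of N
  have hPt : Pᵀ = A * N := by
    rw [hP, hNdef, Matrix.transpose_mul, Matrix.transpose_nonsing_inv,
      Matrix.transpose_mul, Matrix.transpose_transpose]
  have hNPP : P * Pᵀ = N := by
    rw [hPt, hP, hNdef, Matrix.mul_assoc, ← Matrix.mul_assoc Aᵀ A, ← Matrix.mul_assoc,
      Matrix.nonsing_inv_mul _ hdetA, Matrix.one_mul]
  have hPtnorm : ‖Pᵀ‖ = ‖P‖ := by
    rw [← Matrix.conjTranspose_eq_transpose_of_trivial]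
    exact P.l2_opNorm_conjTranspose
  have hNle : ‖N‖ ≤ ‖P‖ * ‖P‖ := by
    calc ‖N‖ = ‖P * Pᵀ‖ := by rw [hNPP]
      _ ≤ ‖P‖ * ‖Pᵀ‖ := Matrix.l2_opNorm_mul P Pᵀ
      _ = ‖P‖ * ‖P‖ := by rw [hPtnorm]
  have hEt : ‖Eᵀ‖ = ‖E‖ := by
    rw [← Matrix.conjTranspose_eq_transpose_of_trivial]
    exact E.l2_opNorm_conjTranspose
  -- key estimate
  have hb1 : e2norm (P *ᵥ (E *ᵥ xh)) ≤ ‖P‖ * (‖E‖ * e2norm xh) :=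
    le_trans (e2norm_mulVec_le P _)
      (mul_le_mul_of_nonneg_left (e2norm_mulVec_le E _) (norm_nonneg P))
  have hb2 : e2norm (N *ᵥ (Eᵀ *ᵥ rh)) ≤ ‖P‖ * ‖P‖ * (‖E‖ * e2norm rh) := by
    calc e2norm (N *ᵥ (Eᵀ *ᵥ rh)) ≤ ‖N‖ * (‖Eᵀ‖ * e2norm rh) :=
          le_trans (e2norm_mulVec_le N _)
            (mul_le_mul_of_nonneg_left (e2norm_mulVec_le Eᵀ _) (norm_nonneg N))
      _ ≤ ‖P‖ * ‖P‖ * (‖E‖ * e2norm rh) := by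
          rw [hEt]
          exact mul_le_mul_of_nonneg_right hNle
            (mul_nonneg (norm_nonneg E) (e2norm_nonneg rh))
  have hkey : e2norm (xh - xs) ≤
      ‖P‖ * ‖E‖ * e2norm xh + ‖P‖ * ‖P‖ * ‖E‖ * e2norm rh := by
    calc e2norm (xh - xs)
        = e2norm (-(P *ᵥ (E *ᵥ xh)) + N *ᵥ (Eᵀ *ᵥ rh)) := by rw [hdec]
      _ ≤ e2norm (-(P *ᵥ (E *ᵥ xh))) + e2norm (N *ᵥ (Eᵀ *ᵥ rh)) := e2norm_add_le _ _
      _ = e2norm (P *ᵥ (E *ᵥ xh)) + e2norm (N *ᵥ (Eᵀ *ᵥ rh)) := by rw [e2norm_neg]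
      _ ≤ ‖P‖ * (‖E‖ * e2norm xh) + ‖P‖ * ‖P‖ * (‖E‖ * e2norm rh) := add_le_add hb1 hb2
      _ = ‖P‖ * ‖E‖ * e2norm xh + ‖P‖ * ‖P‖ * ‖E‖ * e2norm rh := by ring
  -- final arithmetic
  have hx : (0:ℝ) < e2norm xh := e2norm_pos hne
  rw [div_le_iff₀ hx]
  have hArw : (κ * εA * (1 + κ * (e2norm rh / (‖A‖ * e2norm xh)))) * e2norm xh
      = ‖P‖ * ‖E‖ * e2norm xh + ‖P‖ * ‖P‖ * ‖E‖ * e2norm rh := by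
    rw [hεA, hκ]
    field_simp
  rw [hArw]
  exact hkey
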